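/- Let Γ4 = x2x3x4 − x2²x5 − x1x4² ∈ ℂ[x1,…,x5] be the Hurwitz determinant for n = 4, i.e., the ratio det(H4)/x5 where H4 is the 4×4 Hurwitz matrix with rows (x2,x4,0,0), (x1,x3,x5,0), (0,x2,x4,0), (0,x1,x3,x5). Then the determinantal surface V(x1x4 − x2x3, x1x5 − x3², x2x5 − x3x4) ⊆ ℂ⁵ (the rank-≤1 locus of the 2×3 matrix with rows (x1,x2,x3) and (x3,x4,x5)) is contained in the dual variety V(Γ4)*, and it is an irreducible component of V(Γ4)*. -/

import Mathlib

open MvPolynomial Pointwise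

/-- Gradient of a multivariate polynomial at a point. -/
noncomputable def grad {n : ℕ} (f : MvPolynomial (Fin n) ℂ) (x : Fin n → ℂ) : Fin n → ℂ :=
  fun i => eval x (pderiv i f)

/-- Zariski closure: zero locus of the ideal of all polynomials vanishing on `S`. -/
def zclosure {σ : Type} (S : Set (σ → ℂ)) : Set (σ → ℂ) :=
  {x | ∀ p : MvPolynomial σ ℂ, (∀ s ∈ S, eval s p = 0) → eval x p = 0}

/-- Zero locus `V(f)`. -/
def Vp {n : ℕ} (f : MvPolynomial (Fin n) ℂ) : Set (Fin n → ℂ) := {x | eval x f = 0}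

/-- Regular locus. -/
def RegL {n : ℕ} (f : MvPolynomial (Fin n) ℂ) : Set (Fin n → ℂ) :=
  {x | eval x f = 0 ∧ grad f x ≠ 0}

/-- Singular locus. -/
def SingL {n : ℕ} (f : MvPolynomial (Fin n) ℂ) : Set (Fin n → ℂ) :=
  {x | eval x f = 0 ∧ grad f x = 0}

/-- ED correspondence: Zariski closure of pairs (u,x), x regular, u - x ∈ ℂ·∇f(x),
encoded as functions on `Fin n ⊕ Fin n`. -/
def EDcorr {n : ℕ} (f : MvPolynomial (Fin n) ℂ) : Set ((Fin n ⊕ Fin n) → ℂ) :=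
  zclosure {w | ∃ u x : Fin n → ℂ, w = Sum.elim u x ∧ x ∈ RegL f ∧ ∃ t : ℂ, u - x = t • grad f x}

/-- ED data singular locus. -/
def DS {n : ℕ} (f : MvPolynomial (Fin n) ℂ) : Set (Fin n → ℂ) :=
  {u | ∃ x, Sum.elim u x ∈ EDcorr f ∧ x ∈ SingL f}

/-- Dual variety. -/
def dualV {n : ℕ} (f : MvPolynomial (Fin n) ℂ) : Set (Fin n → ℂ) :=
  zclosure {y | ∃ (t : ℂ) (x : Fin n → ℂ), x ∈ RegL f ∧ y = t • grad f x}

/-- Isotropic quadric. -/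
def isoQ (n : ℕ) : Set (Fin n → ℂ) := {x | ∑ i, (x i) ^ 2 = 0}

/-- ED data isotropic locus. -/
def DI {n : ℕ} (f : MvPolynomial (Fin n) ℂ) : Set (Fin n → ℂ) :=
  {u | ∃ x, Sum.elim u x ∈ EDcorr f ∧ x ∈ isoQ n ∩ Vp f}

/-- Zariski-closed sets. -/
def IsZClosed {σ : Type} (S : Set (σ → ℂ)) : Prop := zclosure S = S

/-- Irreducibility with respect to Zariski-closed sets. -/
def IsZIrreducible {σ : Type} (S : Set (σ → ℂ)) : Prop :=
  S.Nonempty ∧ ∀ C₁ C₂ : Set (σ → ℂ), IsZClosed C₁ → IsZClosed C₂ →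
    S ⊆ C₁ ∪ C₂ → S ⊆ C₁ ∨ S ⊆ C₂

/-- `C` is an irreducible component of `S`. -/
def IsIrredComponentOf {σ : Type} (C S : Set (σ → ℂ)) : Prop :=
  C ⊆ S ∧ IsZClosed C ∧ IsZIrreducible C ∧
    ∀ C' : Set (σ → ℂ), IsZClosed C' → IsZIrreducible C' → C ⊆ C' → C' ⊆ S → C' = C


/-- The Hurwitz determinant for `n = 4`: `Γ₄ = x₂x₃x₄ - x₂²x₅ - x₁x₄²`. -/
noncomputable def Gamma4 : MvPolynomial (Fin 5) ℂ :=
  X 1 * X 2 * X 3 - X 1 ^ 2 * X 4 - X 0 * X 3 ^ 2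

/-- The determinantal surface `V(x₁x₄ - x₂x₃, x₁x₅ - x₃², x₂x₅ - x₃x₄) ⊆ ℂ⁵`, the rank-≤1
locus of the 2×3 matrix with rows `(x₁,x₂,x₃)` and `(x₃,x₄,x₅)`. -/
def detSurface : Set (Fin 5 → ℂ) :=
  {x | x 0 * x 3 - x 1 * x 2 = 0 ∧ x 0 * x 4 - x 2 ^ 2 = 0 ∧ x 1 * x 4 - x 2 * x 3 = 0}

/-!
The dual variety of `V(Γ₄)` is exactly the determinantal surface. Every point `t • ∇Γ₄(x)` with
`Γ₄(x) = 0` satisfies the three quadrics (two of them are multiples of `Γ₄(x)`). Conversely the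
surface is the Zariski closure of the image of `(a, b, c) ↦ (a, b, ca, cb, c²a)`, and for `a ≠ 0`
that point equals `-a • ∇Γ₄(cb/a, -c, -b/a, 1, 0)`, a rescaled gradient at a regular point; a
polynomial vanishing on the dense set `a ≠ 0` of `ℂ³` vanishes everywhere. Irreducibility comes
from the same parametrization, since `ℂ[a, b, c]` is a domain.
-/

open Set

section ZariskiClosure

variable {σ τ : Type}

lemma subset_zclosure (S : Set (σ → ℂ)) : S ⊆ zclosure S :=
  fun _ hx _ hp => hp _ hx

lemma isZClosed_of_zclosure_subset {C : Set (σ → ℂ)} (h : zclosure C ⊆ C) : IsZClosed C :=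
  h.antisymm (subset_zclosure C)

lemma isZClosed_zclosure (S : Set (σ → ℂ)) : IsZClosed (zclosure S) :=
  isZClosed_of_zclosure_subset fun _ hx p hp => hx p fun _ hs => hs p hp

lemma zclosure_subset_of_isZClosed {S C : Set (σ → ℂ)} (hC : IsZClosed C) (h : S ⊆ C) :
    zclosure S ⊆ C := by
  rw [← hC]
  exact fun _ hx p hp => hx p fun s hs => hp s (h hs)

lemma isZClosed_setOf_forall_eval_eq_zero (P : Set (MvPolynomial σ ℂ)) :
    IsZClosed {x : σ → ℂ | ∀ p ∈ P, eval x p = 0} :=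
  isZClosed_of_zclosure_subset fun _ hx p hp => hx p fun _ hs => hs p hp

lemma exists_eval_ne_zero_of_not_mem {C : Set (σ → ℂ)} (hC : IsZClosed C) {y : σ → ℂ}
    (hy : y ∉ C) : ∃ p : MvPolynomial σ ℂ, (∀ s ∈ C, eval s p = 0) ∧ eval y p ≠ 0 := by
  rw [← hC] at hy
  simpa [zclosure] using hy

lemma isIrredComponentOf_self {C : Set (σ → ℂ)} (hC : IsZClosed C) (hirr : IsZIrreducible C) :
    IsIrredComponentOf C C :=
  ⟨subset_rfl, hC, hirr, fun _ _ _ hC' hC'C => hC'C.antisymm hC'⟩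

noncomputable def polyMap (m : σ → MvPolynomial τ ℂ) (v : τ → ℂ) : σ → ℂ :=
  fun i => eval v (m i)

lemma eval_polyMap (m : σ → MvPolynomial τ ℂ) (v : τ → ℂ) (p : MvPolynomial σ ℂ) :
    eval (polyMap m v) p = eval v (bind₁ m p) :=
  (eval₂Hom_bind₁ _ _ _ _).symm

lemma eq_zero_of_eval_eq_zero_of_eval_ne_zero {g q : MvPolynomial τ ℂ} (hg : g ≠ 0)
    (h : ∀ v, eval v g ≠ 0 → eval v q = 0) : q = 0 := by
  have hgq : g * q = 0 := MvPolynomial.funext fun v => by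
    rw [map_mul, map_zero, mul_eq_zero]
    exact (em (eval v g = 0)).imp_right (h v)
  exact (mul_eq_zero.mp hgq).resolve_left hg

lemma range_polyMap_subset_zclosure {S : Set (σ → ℂ)} (m : σ → MvPolynomial τ ℂ)
    {g : MvPolynomial τ ℂ} (hg : g ≠ 0) (h : ∀ v, eval v g ≠ 0 → polyMap m v ∈ S) :
    range (polyMap m) ⊆ zclosure S := by
  rintro _ ⟨v, rfl⟩ p hp
  have hpm : bind₁ m p = 0 := eq_zero_of_eval_eq_zero_of_eval_ne_zero hg fun w hw => by
    rw [← eval_polyMap]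
    exact hp _ (h w hw)
  rw [eval_polyMap, hpm, map_zero]

lemma isZIrreducible_zclosure_range_polyMap (m : σ → MvPolynomial τ ℂ) :
    IsZIrreducible (zclosure (range (polyMap m))) := by
  refine ⟨⟨_, subset_zclosure _ (mem_range_self 0)⟩, fun C₁ C₂ hC₁ hC₂ hsub => ?_⟩
  suffices range (polyMap m) ⊆ C₁ ∨ range (polyMap m) ⊆ C₂ from
    this.imp (zclosure_subset_of_isZClosed hC₁) (zclosure_subset_of_isZClosed hC₂)
  by_contra! ⟨h₁, h₂⟩
  obtain ⟨_, ⟨v₁, rfl⟩, hv₁⟩ := not_subset.mp h₁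
  obtain ⟨_, ⟨v₂, rfl⟩, hv₂⟩ := not_subset.mp h₂
  obtain ⟨p₁, hp₁, he₁⟩ := exists_eval_ne_zero_of_not_mem hC₁ hv₁
  obtain ⟨p₂, hp₂, he₂⟩ := exists_eval_ne_zero_of_not_mem hC₂ hv₂
  have hq : bind₁ m p₁ * bind₁ m p₂ ≠ 0 := by
    refine mul_ne_zero (fun h => he₁ ?_) (fun h => he₂ ?_) <;>
      simp only [eval_polyMap, h, map_zero]
  obtain ⟨w, hw⟩ : ∃ w, eval w (bind₁ m p₁ * bind₁ m p₂) ≠ 0 := by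
    by_contra! hw
    exact hq (MvPolynomial.funext (by simpa using hw))
  rw [map_mul, ← eval_polyMap, ← eval_polyMap] at hw
  rcases hsub (subset_zclosure _ (mem_range_self w)) with h | h
  · exact left_ne_zero_of_mul hw (hp₁ _ h)
  · exact right_ne_zero_of_mul hw (hp₂ _ h)

end ZariskiClosure

section Hurwitz

lemma eval_Gamma4 (x : Fin 5 → ℂ) :
    eval x Gamma4 = x 1 * x 2 * x 3 - x 1 ^ 2 * x 4 - x 0 * x 3 ^ 2 := by
  simp [Gamma4]

lemma grad_Gamma4 (x : Fin 5 → ℂ) :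
    grad Gamma4 x = ![-x 3 ^ 2, x 2 * x 3 - 2 * x 1 * x 4, x 1 * x 3,
      x 1 * x 2 - 2 * x 0 * x 3, -x 1 ^ 2] := by
  funext i
  fin_cases i <;> simp [grad, Gamma4, pderiv_X] <;> ring

lemma isZClosed_detSurface : IsZClosed detSurface := by
  have h : detSurface = {x | ∀ p ∈ ({X 0 * X 3 - X 1 * X 2, X 0 * X 4 - X 2 ^ 2,
      X 1 * X 4 - X 2 * X 3} : Set (MvPolynomial (Fin 5) ℂ)), eval x p = 0} := by
    ext x
    simp [detSurface]
  rw [h]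
  exact isZClosed_setOf_forall_eval_eq_zero _

lemma smul_grad_Gamma4_mem_detSurface {x : Fin 5 → ℂ} (hx : eval x Gamma4 = 0) (t : ℂ) :
    t • grad Gamma4 x ∈ detSurface := by
  rw [eval_Gamma4] at hx
  simp only [detSurface, grad_Gamma4, mem_ofPred_eq, Pi.smul_apply, smul_eq_mul,
    Matrix.cons_val]
  refine ⟨?_, ?_, ?_⟩
  · linear_combination (-2 * x 3 * t ^ 2) * hx
  · ring
  · linear_combination (-2 * x 1 * t ^ 2) * hx

lemma dualV_Gamma4_subset_detSurface : dualV Gamma4 ⊆ detSurface :=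
  zclosure_subset_of_isZClosed isZClosed_detSurface <| by
    rintro _ ⟨t, x, ⟨hx, -⟩, rfl⟩
    exact smul_grad_Gamma4_mem_detSurface hx t

noncomputable def detSurfaceChart₀ : Fin 5 → MvPolynomial (Fin 3) ℂ :=
  ![X 0, X 1, X 2 * X 0, X 2 * X 1, X 2 ^ 2 * X 0]

-- The first chart misses points such as `(0, 0, 0, 0, 1)` of `detSurface`; this one covers them.
noncomputable def detSurfaceChart₄ : Fin 5 → MvPolynomial (Fin 3) ℂ :=
  ![X 2 ^ 2 * X 0, X 2 * X 1, X 2 * X 0, X 1, X 0]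

@[simp]
lemma polyMap_detSurfaceChart₀ (v : Fin 3 → ℂ) :
    polyMap detSurfaceChart₀ v = ![v 0, v 1, v 2 * v 0, v 2 * v 1, v 2 ^ 2 * v 0] := by
  funext i
  fin_cases i <;> simp [polyMap, detSurfaceChart₀]

@[simp]
lemma polyMap_detSurfaceChart₄ (v : Fin 3 → ℂ) :
    polyMap detSurfaceChart₄ v = ![v 2 ^ 2 * v 0, v 2 * v 1, v 2 * v 0, v 1, v 0] := by
  funext i
  fin_cases i <;> simp [polyMap, detSurfaceChart₄]

lemma range_detSurfaceChart₀_subset : range (polyMap detSurfaceChart₀) ⊆ detSurface := by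
  rintro _ ⟨v, rfl⟩
  simp only [detSurface, polyMap_detSurfaceChart₀, mem_ofPred_eq]
  simp only [Matrix.cons_val]
  exact ⟨by ring, by ring, by ring⟩

lemma mem_range_detSurfaceChart₀_or_detSurfaceChart₄ {y : Fin 5 → ℂ} (hy : y ∈ detSurface) :
    y ∈ range (polyMap detSurfaceChart₀) ∨ y ∈ range (polyMap detSurfaceChart₄) := by
  obtain ⟨h03, h04, h14⟩ := hy
  by_cases h0 : y 0 = 0
  · have h2 : y 2 = 0 := pow_eq_zero_iff two_ne_zero |>.mp (by linear_combination y 4 * h0 - h04)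
    by_cases h1 : y 1 = 0
    · right
      refine ⟨![y 4, y 3, 0], ?_⟩
      funext i
      fin_cases i <;> simp [h0, h1, h2]
    · left
      have h4 : y 4 = 0 := (mul_eq_zero.mp (by linear_combination h14 + y 3 * h2)).resolve_left h1
      refine ⟨![0, y 1, y 3 / y 1], ?_⟩
      funext i
      fin_cases i <;> simp [h0, h1, h2, h4]
  · left
    refine ⟨![y 0, y 1, y 2 / y 0], ?_⟩
    rw [polyMap_detSurfaceChart₀]
    funext i
    fin_cases i <;> simp [field]
    · linear_combination -h03
    · linear_combination -h04

lemma range_detSurfaceChart₄_subset :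
    range (polyMap detSurfaceChart₄) ⊆ zclosure (range (polyMap detSurfaceChart₀)) := by
  refine range_polyMap_subset_zclosure _ (X_ne_zero 2) fun v hv =>
    ⟨![v 2 ^ 2 * v 0, v 2 * v 1, (v 2)⁻¹], ?_⟩
  simp only [eval_X] at hv
  funext i
  fin_cases i <;> simp [field]

lemma detSurface_eq_zclosure_range :
    detSurface = zclosure (range (polyMap detSurfaceChart₀)) := by
  refine subset_antisymm (fun y hy => ?_)
    (zclosure_subset_of_isZClosed isZClosed_detSurface range_detSurfaceChart₀_subset)
  rcases mem_range_detSurfaceChart₀_or_detSurfaceChart₄ hy with h | h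
  · exact subset_zclosure _ h
  · exact range_detSurfaceChart₄_subset h

lemma detSurfaceChart₀_mem_rescaledGradients {v : Fin 3 → ℂ} (hv : v 0 ≠ 0) :
    ∃ (t : ℂ) (x : Fin 5 → ℂ),
      x ∈ RegL Gamma4 ∧ polyMap detSurfaceChart₀ v = t • grad Gamma4 x := by
  refine ⟨-v 0, ![v 2 * v 1 / v 0, -v 2, -v 1 / v 0, 1, 0], ⟨?_, ?_⟩, ?_⟩
  · simp [eval_Gamma4, field]
  · rw [grad_Gamma4]
    intro h
    simpa using congrFun h 0
  · rw [grad_Gamma4, polyMap_detSurfaceChart₀]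
    funext i
    fin_cases i <;> simp [field]
    ring

lemma detSurface_subset_dualV_Gamma4 : detSurface ⊆ dualV Gamma4 := by
  rw [detSurface_eq_zclosure_range]
  refine zclosure_subset_of_isZClosed (isZClosed_zclosure _) ?_
  refine range_polyMap_subset_zclosure _ (X_ne_zero 0) fun v hv => ?_
  rw [eval_X] at hv
  exact detSurfaceChart₀_mem_rescaledGradients hv

lemma dualV_Gamma4_eq_detSurface : dualV Gamma4 = detSurface :=
  dualV_Gamma4_subset_detSurface.antisymm detSurface_subset_dualV_Gamma4

lemma isZIrreducible_detSurface : IsZIrreducible detSurface := by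
  rw [detSurface_eq_zclosure_range]
  exact isZIrreducible_zclosure_range_polyMap _

end Hurwitz

/-- The determinantal surface `V(x₁x₄ - x₂x₃, x₁x₅ - x₃², x₂x₅ - x₃x₄)` is contained in the
dual variety of the Hurwitz hypersurface `V(Γ₄)` and is an irreducible component of it. -/
theorem hurwitz_dual_component :
    detSurface ⊆ dualV Gamma4 ∧ IsIrredComponentOf detSurface (dualV Gamma4) := by
  rw [dualV_Gamma4_eq_detSurface]
  exact ⟨subset_rfl, isIrredComponentOf_self isZClosed_detSurface isZIrreducible_detSurface⟩
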